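/- Let G be a finite multigraph with edge set E. For k ≥ 1, let N(k) be the number of edge colourings c : E → Fin k such that for every vertex v and every colour i, the number of edge-ends at v coloured i is even (loops at v contribute 2). Then N(k) = Σ_P k(k−1)(k−2)···(k−|P|+1), where the sum is over all set partitions P of E such that every block of P induces a subgraph in which every vertex has even degree. In particular, N(k) is given by a polynomial in k. -/
import Mathlib

open Finset

section Helpers

variable {E : Type*} [Fintype E] [DecidableEq E]

/-- The fiber of colour `i` under colouring `c`. -/
private def fib (k : ℕ) (c : E → Fin k) (i : Fin k) : Finset E :=
  Finset.univ.filter (fun e => c e = i)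

/-- The set of nonempty fibers of a colouring. -/
private def fibers (k : ℕ) (c : E → Fin k) : Finset (Finset E) :=
  (Finset.univ.image (fib k c)).filter (·.Nonempty)

private lemma mem_fib {k : ℕ} {c : E → Fin k} {i : Fin k} {e : E} :
    e ∈ fib k c i ↔ c e = i := by simp [fib]

private lemma mem_fibers {k : ℕ} {c : E → Fin k} {B : Finset E} :
    B ∈ fibers k c ↔ (∃ i, B = fib k c i) ∧ B.Nonempty := by
  simp [fibers, eq_comm]

private lemma eq_fib_of_mem {k : ℕ} {c : E → Fin k} {B : Finset E} (hB : B ∈ fibers k c)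
    {e : E} (he : e ∈ B) : B = fib k c (c e) := by
  obtain ⟨⟨i, rfl⟩, -⟩ := mem_fibers.mp hB
  rw [mem_fib.mp he]

private lemma colour_eq_of_mem {k : ℕ} {c : E → Fin k} {B : Finset E} (hB : B ∈ fibers k c)
    {e e' : E} (he : e ∈ B) (he' : e' ∈ B) : c e = c e' := by
  have h := eq_fib_of_mem hB he'
  exact mem_fib.mp (h ▸ he)

private lemma existsUnique_block {P : Finset (Finset E)}
    (hdisj : ∀ B ∈ P, ∀ B' ∈ P, B ≠ B' → Disjoint B B')
    (hcov : P.sup id = Finset.univ) (e : E) :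
    ∃! B, B ∈ P ∧ e ∈ B := by
  have h : e ∈ P.sup id := by rw [hcov]; exact mem_univ e
  rw [Finset.mem_sup] at h
  obtain ⟨B, hB, heB⟩ := h
  refine ⟨B, ⟨hB, heB⟩, ?_⟩
  rintro B' ⟨hB', heB'⟩
  by_contra hne
  exact (Finset.disjoint_left.mp (hdisj B' hB' B hB hne)) heB' heB

/-- The unique block of `P` containing `e`. -/
private def blk {P : Finset (Finset E)} (h : ∀ e : E, ∃! B, B ∈ P ∧ e ∈ B) (e : E) :
    Finset E :=
  Finset.choose (fun B => e ∈ B) P (h e)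

private lemma blk_mem {P : Finset (Finset E)} (h : ∀ e : E, ∃! B, B ∈ P ∧ e ∈ B) (e : E) :
    blk h e ∈ P := Finset.choose_mem _ _ _

private lemma mem_blk {P : Finset (Finset E)} (h : ∀ e : E, ∃! B, B ∈ P ∧ e ∈ B) (e : E) :
    e ∈ blk h e := Finset.choose_property (fun B => e ∈ B) P (h e)

private lemma blk_eq_of_mem {P : Finset (Finset E)} (h : ∀ e : E, ∃! B, B ∈ P ∧ e ∈ B)
    {e : E} {B : Finset E} (hB : B ∈ P) (he : e ∈ B) : blk h e = B :=
  (h e).unique ⟨blk_mem h e, mem_blk h e⟩ ⟨hB, he⟩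

/-- From a colouring whose fibers are `P`, the induced injection `P ↪ Fin k`. -/
private noncomputable def toEmb {k : ℕ} {P : Finset (Finset E)} (hne : ∀ B ∈ P, B.Nonempty)
    (c : E → Fin k) (hc : fibers k c = P) : {B // B ∈ P} ↪ Fin k where
  toFun B := c (hne B.1 B.2).choose
  inj' := by
    rintro ⟨B, hB⟩ ⟨B', hB'⟩ hcc
    simp only at hcc
    have h1 : B = fib k c (c (hne B hB).choose) :=
      eq_fib_of_mem (hc ▸ hB) (hne B hB).choose_spec
    have h2 : B' = fib k c (c (hne B' hB').choose) :=
      eq_fib_of_mem (hc ▸ hB') (hne B' hB').choose_spec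
    exact Subtype.ext (show B = B' by rw [h1, h2, hcc])

/-- From an injection `P ↪ Fin k`, the induced colouring. -/
private def fromEmb {k : ℕ} {P : Finset (Finset E)} (h : ∀ e : E, ∃! B, B ∈ P ∧ e ∈ B)
    (g : {B // B ∈ P} ↪ Fin k) (e : E) : Fin k :=
  g ⟨blk h e, blk_mem h e⟩

private lemma fib_fromEmb {k : ℕ} {P : Finset (Finset E)}
    (h : ∀ e : E, ∃! B, B ∈ P ∧ e ∈ B) (g : {B // B ∈ P} ↪ Fin k) (e : E) :
    fib k (fromEmb h g) (fromEmb h g e) = blk h e := by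
  ext e'
  simp only [mem_fib, fromEmb]
  constructor
  · intro hgg
    have : blk h e' = blk h e := by
      have := g.injective hgg
      exact congrArg Subtype.val this
    exact this ▸ mem_blk h e'
  · intro he'
    have : blk h e' = blk h e := blk_eq_of_mem h (blk_mem h e) he'
    simp [this]

private lemma fibers_fromEmb {k : ℕ} {P : Finset (Finset E)} (hne : ∀ B ∈ P, B.Nonempty)
    (h : ∀ e : E, ∃! B, B ∈ P ∧ e ∈ B) (g : {B // B ∈ P} ↪ Fin k) :
    fibers k (fromEmb h g) = P := by
  ext B
  rw [mem_fibers]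
  constructor
  · rintro ⟨⟨i, rfl⟩, hB⟩
    obtain ⟨e, he⟩ := hB
    have hie : i = fromEmb h g e := (mem_fib.mp he).symm
    rw [hie, fib_fromEmb]
    exact blk_mem h e
  · intro hB
    obtain ⟨e, he⟩ := hne B hB
    have hblk : blk h e = B := blk_eq_of_mem h hB he
    refine ⟨⟨fromEmb h g e, ?_⟩, ?_⟩
    · rw [fib_fromEmb, hblk]
    · exact ⟨e, he⟩

/-- Counting colourings with a fixed fiber partition. -/
private lemma count_fixed_fibers {k : ℕ} {P : Finset (Finset E)}
    (hne : ∀ B ∈ P, B.Nonempty)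
    (hdisj : ∀ B ∈ P, ∀ B' ∈ P, B ≠ B' → Disjoint B B')
    (hcov : P.sup id = Finset.univ) :
    (Finset.univ.filter (fun c : E → Fin k => fibers k c = P)).card
      = Nat.descFactorial k P.card := by
  classical
  have h : ∀ e : E, ∃! B, B ∈ P ∧ e ∈ B := existsUnique_block hdisj hcov
  have key : (Finset.univ.filter (fun c : E → Fin k => fibers k c = P)).card
      = (Finset.univ : Finset ({B // B ∈ P} ↪ Fin k)).card := by
    refine Finset.card_bij' (fun c hc => toEmb hne c (by simpa using hc))
      (fun g _ => fromEmb h g) ?_ ?_ ?_ ?_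
    · intro c hc
      exact mem_univ _
    · intro g _
      simp only [mem_filter, mem_univ, true_and]
      exact fibers_fromEmb hne h g
    · intro c hc
      have hc' : fibers k c = P := by simpa using hc
      funext e
      show fromEmb h (toEmb hne c hc') e = c e
      simp only [fromEmb, toEmb, Function.Embedding.coeFn_mk]
      exact colour_eq_of_mem (hc' ▸ blk_mem h e)
        ((hne (blk h e) (blk_mem h e)).choose_spec) (mem_blk h e)
    · intro g _
      apply Function.Embedding.ext
      rintro ⟨B, hB⟩
      simp only [toEmb, Function.Embedding.coeFn_mk, fromEmb]
      congr 1
      apply Subtype.ext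
      exact blk_eq_of_mem h hB
        ((hne B hB).choose_spec)
  rw [key, Finset.card_univ, Fintype.card_embedding_eq, Fintype.card_fin, Fintype.card_coe]

end Helpers

/-- Let a finite multigraph be given by a finite edge set `E`, a finite vertex set `V`,
and two end maps `v₁ v₂ : E → V` (a loop at `v` has `v₁ e = v₂ e = v` and contributes
two edge-ends at `v`). The number of edge `k`-colourings in which every vertex sees
every colour on an even number of its edge-ends equals the sum, over all set partitions
`P` of `E` each of whose blocks induces a subgraph with all degrees even, of the
falling factorial `k(k−1)⋯(k−|P|+1)`. -/
theorem stmt_10 {V E : Type*} [Fintype V] [Fintype E] [DecidableEq V] [DecidableEq E]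
    (v₁ v₂ : E → V) (k : ℕ) (hk : 1 ≤ k) :
    (Finset.univ.filter (fun c : E → Fin k =>
      ∀ v : V, ∀ i : Fin k,
        Even ((Finset.univ.filter (fun e : E => c e = i ∧ v₁ e = v)).card +
              (Finset.univ.filter (fun e : E => c e = i ∧ v₂ e = v)).card))).card
    = ∑ P ∈ Finset.univ.filter (fun P : Finset (Finset E) =>
        (∀ B ∈ P, B.Nonempty) ∧
        (∀ B ∈ P, ∀ B' ∈ P, B ≠ B' → Disjoint B B') ∧
        P.sup id = Finset.univ ∧
        (∀ B ∈ P, ∀ v : V,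
          Even ((B.filter (fun e : E => v₁ e = v)).card +
                (B.filter (fun e : E => v₂ e = v)).card))),
        Nat.descFactorial k P.card := by
  classical
  -- filters compatibility
  have hfilt : ∀ (c : E → Fin k) (i : Fin k) (f : E → V) (v : V),
      Finset.univ.filter (fun e : E => c e = i ∧ f e = v)
        = (fib k c i).filter (fun e => f e = v) := by
    intro c i f v
    rw [fib, Finset.filter_filter]
  -- evenness transfer
  have heven : ∀ c : E → Fin k,
      (∀ v : V, ∀ i : Fin k,
        Even ((Finset.univ.filter (fun e : E => c e = i ∧ v₁ e = v)).card +
              (Finset.univ.filter (fun e : E => c e = i ∧ v₂ e = v)).card))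
      ↔ (∀ B ∈ fibers k c, ∀ v : V,
          Even ((B.filter (fun e : E => v₁ e = v)).card +
                (B.filter (fun e : E => v₂ e = v)).card)) := by
    intro c
    constructor
    · intro H B hB v
      obtain ⟨⟨i, rfl⟩, -⟩ := mem_fibers.mp hB
      have := H v i
      rwa [hfilt, hfilt] at this
    · intro H v i
      rw [hfilt, hfilt]
      by_cases hne : (fib k c i).Nonempty
      · exact H _ (mem_fibers.mpr ⟨⟨i, rfl⟩, hne⟩) v
      · rw [Finset.not_nonempty_iff_eq_empty] at hne
        simp [hne]
  -- fibers of a good colouring form a good partition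
  have hmap : ∀ c ∈ Finset.univ.filter (fun c : E → Fin k =>
      ∀ v : V, ∀ i : Fin k,
        Even ((Finset.univ.filter (fun e : E => c e = i ∧ v₁ e = v)).card +
              (Finset.univ.filter (fun e : E => c e = i ∧ v₂ e = v)).card)),
      fibers k c ∈ Finset.univ.filter (fun P : Finset (Finset E) =>
        (∀ B ∈ P, B.Nonempty) ∧
        (∀ B ∈ P, ∀ B' ∈ P, B ≠ B' → Disjoint B B') ∧
        P.sup id = Finset.univ ∧
        (∀ B ∈ P, ∀ v : V,
          Even ((B.filter (fun e : E => v₁ e = v)).card +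
                (B.filter (fun e : E => v₂ e = v)).card))) := by
    intro c hc
    rw [mem_filter] at hc ⊢
    refine ⟨mem_univ _, ?_, ?_, ?_, (heven c).mp hc.2⟩
    · intro B hB
      exact (mem_fibers.mp hB).2
    · intro B hB B' hB' hBB'
      obtain ⟨⟨i, rfl⟩, -⟩ := mem_fibers.mp hB
      obtain ⟨⟨i', rfl⟩, -⟩ := mem_fibers.mp hB'
      rw [Finset.disjoint_left]
      intro e he he'
      exact hBB' (by rw [← mem_fib.mp he, ← mem_fib.mp he'])
    · apply Finset.eq_univ_of_forall
      intro e
      rw [Finset.mem_sup]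
      refine ⟨fib k c (c e), mem_fibers.mpr ⟨⟨c e, rfl⟩, ⟨e, mem_fib.mpr rfl⟩⟩,
        mem_fib.mpr rfl⟩
  rw [Finset.card_eq_sum_card_fiberwise hmap]
  refine Finset.sum_congr rfl ?_
  intro P hP
  rw [mem_filter] at hP
  obtain ⟨-, hne, hdisj, hcov, hev⟩ := hP
  rw [← count_fixed_fibers hne hdisj hcov (k := k)]
  congr 1
  rw [Finset.filter_filter]
  apply Finset.filter_congr
  intro c _
  constructor
  · exact fun h => h.2
  · intro h
    exact ⟨(heven c).mpr (h ▸ hev), h⟩
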